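/- arXiv:1608.07259 — 3 statements merged into one kernel-verified Lean document; each statement's English description precedes it below -/
import Mathlib

section
/- Let the futile cycle network have species set 𝒮 = {S₀, K, S₀K, S₁, F, S₁F} and reactions S₀+K → S₀K, S₀K → S₀+K, S₀K → S₁+K, S₁+F → S₁F, S₁F → S₁+F, S₁F → S₀+F. Then every siphon of this network contains at least one of the three sets {K, S₀K}, {F, S₁F}, {S₀, S₁, S₀K, S₁F}. -/
/-- Species of the futile cycle (1-site phosphorylation) network. -/
inductive FCSpecies : Type
  | S0 | K | S0K | S1 | F | S1F
  deriving DecidableEq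

open FCSpecies

/-- The six reactions of the futile cycle, given by their sets of reactant species
and product species (all stoichiometric coefficients are 1). -/
def FCReactions : List (Set FCSpecies × Set FCSpecies) :=
  [({S0, K}, {S0K}),       -- S₀+K → S₀K
   ({S0K}, {S0, K}),       -- S₀K → S₀+K
   ({S0K}, {S1, K}),       -- S₀K → S₁+K
   ({S1, F}, {S1F}),       -- S₁+F → S₁F
   ({S1F}, {S1, F}),       -- S₁F → S₁+F
   ({S1F}, {S0, F})]       -- S₁F → S₀+F

/-- A siphon is a nonempty set of species such that every reaction with a product
species in the set also has a reactant species in the set. -/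
def IsSiphon (Sig : Set FCSpecies) : Prop :=
  Sig.Nonempty ∧ ∀ rxn ∈ FCReactions, (rxn.2 ∩ Sig).Nonempty → (rxn.1 ∩ Sig).Nonempty

set_option maxHeartbeats 2000000 in
/-- Every siphon of the futile cycle contains `{K, S₀K}`, `{F, S₁F}`, or
`{S₀, S₁, S₀K, S₁F}` (the supports of the P-semiflows). -/
theorem stmt9 (Sig : Set FCSpecies) (hSig : IsSiphon Sig) :
    ({K, S0K} : Set FCSpecies) ⊆ Sig ∨ ({F, S1F} : Set FCSpecies) ⊆ Sig ∨
      ({S0, S1, S0K, S1F} : Set FCSpecies) ⊆ Sig := by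
  obtain ⟨⟨x, hx⟩, h⟩ := hSig
  have h1 := h ({S0, K}, {S0K}) (by simp [FCReactions])
  have h2 := h ({S0K}, {S0, K}) (by simp [FCReactions])
  have h3 := h ({S0K}, {S1, K}) (by simp [FCReactions])
  have h4 := h ({S1, F}, {S1F}) (by simp [FCReactions])
  have h5 := h ({S1F}, {S1, F}) (by simp [FCReactions])
  have h6 := h ({S1F}, {S0, F}) (by simp [FCReactions])
  simp only [Set.inter_nonempty, Set.subset_def, Set.mem_insert_iff,
    Set.mem_singleton_iff, exists_eq_or_imp, exists_eq_left, forall_eq_or_imp,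
    forall_eq] at h1 h2 h3 h4 h5 h6 ⊢
  cases x <;> tauto
end

section
/- Let Σ be a siphon of the all-encompassing processive network (with reactions P_i + E_i → C_{i1} → ⋯ → C_{i n_i} → P_{i+1} + E_i for each i, indices mod m, plus possibly some reverse reactions). Then either there exists an index i such that {E_i, C_{i1}, …, C_{i n_i}} ⊆ Σ, or Σ contains all of the species P₁, …, P_m and all of the C_{ij}. Consequently, every siphon contains the support of a nonnegative conservation law, so the network has the siphon/P-semiflow property. -/
/-!
Reading a siphon backwards along the chain `P i + E i → C i 1 → ⋯ → C i (n i) → P (i+1) + E i`: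
once a product of some step of component `i` lies in the siphon, so do all earlier
intermediates `C i k` and one of the species `P i`, `E i`. If some enzyme `E i` lies in
the siphon, the release reaction then forces all of `C i ·` in. Otherwise the backward
reading never stops at an enzyme, so each `P (i+1)` drags in `P i` and all of `C i ·`;
going once around the substrate cycle gives every `P` and every `C`.
-/

/-- Species of the all-encompassing processive network: substrates `P i`
(`Sum.inl i`), enzymes `E i` (`Sum.inr (Sum.inl i)`), and intermediates `C i j`
(`Sum.inr (Sum.inr ⟨i, j⟩)`). -/
def AESpecies (m : ℕ) (n : Fin m → ℕ) : Type :=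
  Fin m ⊕ Fin m ⊕ (Σ i : Fin m, Fin (n i))

/-- `x` is a reactant species of the `j`-th forward reaction of component `i`
(`j = 0`: binding `P i + E i → C i 1`; `1 ≤ j ≤ n i`: reactant `C i j`,
0-indexed as `C i (j-1)`). -/
def AEreact (m : ℕ) (n : Fin m → ℕ) (i : Fin m) (j : ℕ) (x : AESpecies m n) : Prop :=
  (j = 0 ∧ (x = Sum.inl i ∨ x = Sum.inr (Sum.inl i))) ∨
  (∃ j' : Fin (n i), (j' : ℕ) + 1 = j ∧ x = Sum.inr (Sum.inr ⟨i, j'⟩))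

/-- `x` is a product species of the `j`-th forward reaction of component `i`
(`j = n i`: release giving `P (i+1) + E i`, with `P`-index mod `m`; `j < n i`:
product `C i (j+1)`, 0-indexed as `C i j`). -/
def AEprod (m : ℕ) (n : Fin m → ℕ) (i : Fin m) (j : ℕ) (x : AESpecies m n) : Prop :=
  (j = n i ∧ ((∃ p : Fin m, (p : ℕ) = ((i : ℕ) + 1) % m ∧ x = Sum.inl p) ∨
      x = Sum.inr (Sum.inl i))) ∨
  (∃ j' : Fin (n i), (j' : ℕ) = j ∧ x = Sum.inr (Sum.inr ⟨i, j'⟩))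

/-- A siphon of the all-encompassing network whose reactions are all forward
reactions together with the reverse reactions indexed by `Rev`: a nonempty set of
species such that every reaction with a product species in the set has a reactant
species in the set. -/
def AESiphon (m : ℕ) (n : Fin m → ℕ) (Rev : Set (Fin m × ℕ))
    (Sig : Set (AESpecies m n)) : Prop :=
  Sig.Nonempty ∧
  (∀ (i : Fin m) (j : ℕ), j ≤ n i →
    ((∃ x ∈ Sig, AEprod m n i j x) → ∃ x ∈ Sig, AEreact m n i j x)) ∧
  (∀ (i : Fin m) (j : ℕ), j ≤ n i → (i, j) ∈ Rev →
    ((∃ x ∈ Sig, AEreact m n i j x) → ∃ x ∈ Sig, AEprod m n i j x))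

open Fin.NatCast in
theorem Fin.forall_of_add_one_imp {m : ℕ} [NeZero m] {S : Fin m → Prop} {q : Fin m}
    (hq : S q) (hS : ∀ p, S (p + 1) → S p) (p : Fin m) : S p := by
  have hsteps : ∀ k : ℕ, S (p + k) → S p := by
    intro k
    induction k with
    | zero => simp
    | succ k ih =>
      intro h
      exact ih (hS _ (by simpa [add_assoc] using h))
  exact hsteps (q - p : Fin m) (by simpa using hq)

theorem Fin.val_add_one_eq_mod {m : ℕ} [NeZero m] (i : Fin m) :
    ((i + 1 : Fin m) : ℕ) = ((i : ℕ) + 1) % m := by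
  simp [Fin.val_add]

namespace AESiphon

variable {m : ℕ} {n : Fin m → ℕ} {Rev : Set (Fin m × ℕ)} {Sig : Set (AESpecies m n)}

theorem upstream_mem_of_prod_mem (hSig : AESiphon m n Rev Sig) (i : Fin m) :
    ∀ j ≤ n i, (∃ x ∈ Sig, AEprod m n i j x) →
      (∀ k : Fin (n i), (k : ℕ) < j → Sum.inr (Sum.inr ⟨i, k⟩) ∈ Sig) ∧
      (Sum.inl i ∈ Sig ∨ Sum.inr (Sum.inl i) ∈ Sig) := by
  intro j
  induction j with
  | zero =>
    intro _ hprod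
    obtain ⟨x, hx, ⟨-, rfl | rfl⟩ | ⟨k, hk, -⟩⟩ := hSig.2.1 i 0 (Nat.zero_le _) hprod
    · exact ⟨fun _ hk => absurd hk (Nat.not_lt_zero _), Or.inl hx⟩
    · exact ⟨fun _ hk => absurd hk (Nat.not_lt_zero _), Or.inr hx⟩
    · omega
  | succ j ih =>
    intro hj hprod
    obtain ⟨x, hx, ⟨hj0, -⟩ | ⟨k, hk, rfl⟩⟩ := hSig.2.1 i (j + 1) hj hprod
    · omega
    obtain ⟨hlower, hPE⟩ := ih (by omega) ⟨_, hx, Or.inr ⟨k, by omega, rfl⟩⟩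
    refine ⟨fun k' hk' => ?_, hPE⟩
    rcases Nat.lt_succ_iff_lt_or_eq.mp hk' with hlt | heq
    · exact hlower k' hlt
    · rwa [Fin.ext (show (k' : ℕ) = k by omega)]

theorem substrate_or_enzyme_mem_of_intermediate_mem (hSig : AESiphon m n Rev Sig)
    {i : Fin m} {k : Fin (n i)} (hk : Sum.inr (Sum.inr ⟨i, k⟩) ∈ Sig) :
    Sum.inl i ∈ Sig ∨ Sum.inr (Sum.inl i) ∈ Sig :=
  (hSig.upstream_mem_of_prod_mem i k k.isLt.le ⟨_, hk, Or.inr ⟨k, rfl, rfl⟩⟩).2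

theorem intermediates_mem_of_enzyme_mem (hSig : AESiphon m n Rev Sig) {i : Fin m}
    (hE : Sum.inr (Sum.inl i) ∈ Sig) (k : Fin (n i)) :
    Sum.inr (Sum.inr ⟨i, k⟩) ∈ Sig :=
  (hSig.upstream_mem_of_prod_mem i (n i) le_rfl
    ⟨_, hE, Or.inl ⟨rfl, Or.inr rfl⟩⟩).1 k k.isLt

theorem upstream_mem_of_substrate_add_one_mem [NeZero m] (hSig : AESiphon m n Rev Sig)
    {i : Fin m} (hP : Sum.inl (i + 1) ∈ Sig) :
    (∀ k : Fin (n i), Sum.inr (Sum.inr ⟨i, k⟩) ∈ Sig) ∧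
      (Sum.inl i ∈ Sig ∨ Sum.inr (Sum.inl i) ∈ Sig) := by
  obtain ⟨hC, hPE⟩ := hSig.upstream_mem_of_prod_mem i (n i) le_rfl
    ⟨_, hP, Or.inl ⟨rfl, Or.inl ⟨i + 1, Fin.val_add_one_eq_mod i, rfl⟩⟩⟩
  exact ⟨fun k => hC k k.isLt, hPE⟩

theorem exists_substrate_mem_of_forall_enzyme_notMem (hSig : AESiphon m n Rev Sig)
    (hE : ∀ i, Sum.inr (Sum.inl i) ∉ Sig) : ∃ q, Sum.inl q ∈ Sig := by
  obtain ⟨x, hx⟩ := hSig.1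
  rcases x with q | i | ⟨i, k⟩
  · exact ⟨q, hx⟩
  · exact absurd hx (hE i)
  · exact ⟨i, (hSig.substrate_or_enzyme_mem_of_intermediate_mem hx).resolve_right (hE i)⟩

end AESiphon

theorem stmt14_general (m : ℕ) (n : Fin m → ℕ)
    (Rev : Set (Fin m × ℕ)) (Sig : Set (AESpecies m n))
    (hSig : AESiphon m n Rev Sig) :
    (∃ i : Fin m, Sum.inr (Sum.inl i) ∈ Sig ∧
      ∀ j : Fin (n i), Sum.inr (Sum.inr ⟨i, j⟩) ∈ Sig) ∨
    ((∀ p : Fin m, Sum.inl p ∈ Sig) ∧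
      ∀ (i : Fin m) (j : Fin (n i)), Sum.inr (Sum.inr ⟨i, j⟩) ∈ Sig) := by
  by_cases hE : ∃ i : Fin m, Sum.inr (Sum.inl i) ∈ Sig
  · obtain ⟨i, hEi⟩ := hE
    exact Or.inl ⟨i, hEi, hSig.intermediates_mem_of_enzyme_mem hEi⟩
  push Not at hE
  obtain ⟨q, hq⟩ := hSig.exists_substrate_mem_of_forall_enzyme_notMem hE
  have : NeZero m := NeZero.of_pos q.pos
  have hP : ∀ p : Fin m, Sum.inl p ∈ Sig := Fin.forall_of_add_one_imp hq fun p hp =>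
    (hSig.upstream_mem_of_substrate_add_one_mem hp).2.resolve_right (hE p)
  exact Or.inr ⟨hP, fun i => (hSig.upstream_mem_of_substrate_add_one_mem (hP (i + 1))).1⟩

/-- Every siphon of the all-encompassing processive network contains, for some
`i`, all of `{E i, C i 1, …, C i (n i)}`, or else contains all the `P i` and all
the `C i j`; hence every siphon contains the support of a nonnegative conservation
law (the enzyme semiflow `v⁽ⁱ⁾` or the total-substrate semiflow `w`). -/
theorem stmt14 (m : ℕ) (hm : 2 ≤ m) (n : Fin m → ℕ) (hn : ∀ i, 1 ≤ n i)
    (Rev : Set (Fin m × ℕ)) (Sig : Set (AESpecies m n))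
    (hSig : AESiphon m n Rev Sig) :
    (∃ i : Fin m, Sum.inr (Sum.inl i) ∈ Sig ∧
      ∀ j : Fin (n i), Sum.inr (Sum.inr ⟨i, j⟩) ∈ Sig) ∨
    ((∀ p : Fin m, Sum.inl p ∈ Sig) ∧
      ∀ (i : Fin m) (j : Fin (n i)), Sum.inr (Sum.inr ⟨i, j⟩) ∈ Sig) :=
  stmt14_general m n Rev Sig hSig
end

section
/- Let G* be obtained from a reaction network G by removing an intermediate Y satisfying conditions (l1) and (l2) with adjacent complexes y and y' and common part e. If c is a positive conservation law of G assigning value c(Y) to the species Y and satisfying c(y) = c(Y) = c(y') (where c(z) denotes the c-weighted sum of the coefficients of complex z), then the restriction of c to the species of G* is a nonnegative conservation law of G*. -/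
/-- Removal of an intermediate preserves conservation laws.  Let `G` be a network
with species `S` (complexes being functions `S → ℕ`), and let `Y` be an intermediate
satisfying (l1) and (l2): `Y` (as a complex, the single species `Y` with coefficient
1) appears in no other complex, and there are reactions `ρ₁ : y → Y` and
`ρ₂ : Y → y'`, where common species of `y` and `y'` appear with equal coefficients
(their sum being the complex `e`).  If `c` is a positive conservation law of `G`
with `c(y) = c(Y) = c(y')`, then `c` (restricted to the species of the reduced
network `G*`) is a nonnegative conservation law of `G*`, whose reactions are the
`Y`-free reactions of `G` together with the new reaction `y − e → y' − e`. -/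
theorem stmt17 {S : Type*} [Fintype S] [DecidableEq S] {R : Type*}
    (react prod : R → S → ℕ)               -- reactant and product complexes of G
    (Y : S) (y y' : S → ℕ) (ρ₁ ρ₂ : R)
    (hρ₁ : react ρ₁ = y ∧ prod ρ₁ = fun s => if s = Y then 1 else 0)
    (hρ₂ : (react ρ₂ = fun s => if s = Y then 1 else 0) ∧ prod ρ₂ = y')
    -- (l1): Y appears in no complex other than the complex Y itself
    (hl1 : y Y = 0 ∧ y' Y = 0 ∧
      ∀ ρ : R, ρ ≠ ρ₁ → ρ ≠ ρ₂ → react ρ Y = 0 ∧ prod ρ Y = 0)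
    -- (l2)(iii): common species of y and y' appear with equal coefficients
    (hl2 : ∀ s, 0 < y s → 0 < y' s → y s = y' s)
    (e : S → ℕ) (he : e = fun s => if 0 < y s ∧ 0 < y' s then y s else 0)
    (c : S → ℝ) (hc_pos : ∀ s, 0 < c s)
    -- c is a conservation law of G
    (hc : ∀ ρ : R, ∑ s, c s * react ρ s = ∑ s, c s * prod ρ s)
    (hcy : ∑ s, c s * y s = c Y) (hcy' : ∑ s, c s * y' s = c Y) :
    (∀ s, 0 ≤ c s) ∧
    -- c is conserved by the new reaction y − e → y' − e of G*
    (∑ s, c s * ((y s - e s : ℕ) : ℝ) = ∑ s, c s * ((y' s - e s : ℕ) : ℝ)) ∧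
    -- and by all remaining (unchanged) reactions of G*
    (∀ ρ : R, ρ ≠ ρ₁ → ρ ≠ ρ₂ →
      ∑ s, c s * react ρ s = ∑ s, c s * prod ρ s) := by
  have hey : ∀ s, e s ≤ y s := by
    intro s; rw [he]; dsimp only; split <;> simp
  have hey' : ∀ s, e s ≤ y' s := by
    intro s; rw [he]; dsimp only; split
    · next h => rw [hl2 s h.1 h.2]
    · simp
  refine ⟨fun s => (hc_pos s).le, ?_, fun ρ h1 h2 => hc ρ⟩
  have key : ∀ (z : S → ℕ), (∀ s, e s ≤ z s) →
      ∑ s, c s * ((z s - e s : ℕ) : ℝ) = (∑ s, c s * z s) - ∑ s, c s * e s := by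
    intro z hz
    rw [← Finset.sum_sub_distrib]
    apply Finset.sum_congr rfl
    intro s _
    rw [Nat.cast_sub (hz s)]; ring
  rw [key y hey, key y' hey', hcy, hcy']
end
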